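/- For A ⊆ E in the hypercube Q_d with |A| ≤ d^C for a fixed constant C, one has |A| = O(|N(A)|/d); i.e., there is a constant c = c(C) such that |A| ≤ c·|N(A)|/d for all large d. -/

import Mathlib

/-- The `d`-dimensional hypercube graph. -/
def cubeGraph (d : ℕ) : SimpleGraph (Fin d → ZMod 2) where
  Adj x y := hammingDist x y = 1
  symm := by constructor; intro x y h; rwa [hammingDist_comm]
  loopless := by constructor; intro x h; simp [hammingDist_self] at h

/-- The even bipartition class of the hypercube. -/
def evenSide (d : ℕ) : Set (Fin d → ZMod 2) := {v | ∑ i, v i = 0}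

/-- The neighbourhood of a set of vertices. -/
def nbhd {V : Type*} (G : SimpleGraph V) (A : Set V) : Set V := {y | ∃ a ∈ A, G.Adj a y}

/-!
By Kruskal–Katona in Lovász's form, an `r`-uniform family of size `m = C(x, r)` has a shadow of
size at least `C(x, r - 1) = m · r / (x - r + 1)`. When `m ≤ n ^ C` and `r ≥ n / 2 - 1`, the
parameter satisfies `x - r ≤ C + 2`, so the shadow beats the family by a factor of order `n / C`.
Mathlib states the Lovász form for integral `x` only; a non-integral `x` is reached by adding to
every member one of `D` fresh points, which multiplies the size of the family by `D`.

On the cube, a vertex is identified with its support. Weight levels above `n / 2` expand through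
their shadow, the others through their upper shadow (the shadow of the complements); both lie in
the neighbourhood, which costs a factor `2`.
-/

open Finset
open scoped FinsetFamily Nat

theorem Nat.two_mul_pow_le_choose {n r C : ℕ} (hn : 2 ^ (C + 2) * (C + 1)! ≤ n)
    (hr : n ≤ 2 * (r + 1)) : 2 * n ^ C ≤ (r + (C + 1)).choose (C + 1) := by
  have hchoose : (r + 1) ^ (C + 1) ≤ (C + 1)! * (r + (C + 1)).choose (C + 1) :=
    (Nat.pow_succ_le_ascFactorial _ _).trans
      (Nat.ascFactorial_eq_factorial_mul_choose r (C + 1)).le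
  refine Nat.le_of_mul_le_mul_left ?_ (show 0 < 2 ^ (C + 1) * (C + 1)! by positivity)
  calc 2 ^ (C + 1) * (C + 1)! * (2 * n ^ C) = 2 ^ (C + 2) * (C + 1)! * n ^ C := by ring
    _ ≤ n * n ^ C := by gcongr
    _ = n ^ (C + 1) := by ring
    _ ≤ (2 * (r + 1)) ^ (C + 1) := by gcongr
    _ = 2 ^ (C + 1) * (r + 1) ^ (C + 1) := mul_pow _ _ _
    _ ≤ 2 ^ (C + 1) * ((C + 1)! * (r + (C + 1)).choose (C + 1)) := by gcongr
    _ = _ := by ring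

namespace Finset

section BlowUp

variable {n D N r : ℕ} (h : n + D ≤ N) {𝒜 : Finset (Finset (Fin n))}

def blowUpSet (p : Finset (Fin n) × Fin D) : Finset (Fin N) :=
  insert (Fin.castLE h (Fin.natAdd n p.2)) (p.1.map (Fin.castLEEmb (by omega)))

def blowUp (𝒜 : Finset (Finset (Fin n))) : Finset (Finset (Fin N)) :=
  (𝒜 ×ˢ univ).image (blowUpSet h)

theorem castLE_natAdd_notMem_map (s : Finset (Fin n)) (j : Fin D) :
    Fin.castLE h (Fin.natAdd n j) ∉ s.map (Fin.castLEEmb (by omega)) := by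
  simp only [mem_map, not_exists, not_and]
  intro a _ ha
  have : (a : ℕ) = n + j := congrArg Fin.val ha
  omega

theorem erase_blowUpSet (p : Finset (Fin n) × Fin D) :
    (blowUpSet h p).erase (Fin.castLE h (Fin.natAdd n p.2)) =
      p.1.map (Fin.castLEEmb (by omega)) :=
  erase_insert (castLE_natAdd_notMem_map h _ _)

theorem blowUpSet_injective : Function.Injective (blowUpSet h (D := D)) := by
  intro p q hpq
  have h₂ : p.2 = q.2 := by
    have : Fin.castLE h (Fin.natAdd n p.2) ∈ blowUpSet h q := hpq ▸ mem_insert_self _ _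
    exact Fin.natAdd_injective _ _ <| Fin.castLE_injective h <|
      (mem_insert.1 this).resolve_right (castLE_natAdd_notMem_map h _ _)
  have h₁ := erase_blowUpSet h p
  rw [hpq, h₂, erase_blowUpSet] at h₁
  exact Prod.ext (map_injective _ h₁.symm) h₂

theorem card_blowUp : #(blowUp h 𝒜) = #𝒜 * D := by
  rw [blowUp, card_image_of_injective _ (blowUpSet_injective h), card_product, card_univ,
    Fintype.card_fin]

theorem sized_blowUp (h𝒜 : (𝒜 : Set (Finset (Fin n))).Sized r) :
    (blowUp h 𝒜 : Set (Finset (Fin N))).Sized (r + 1) := by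
  intro B hB
  obtain ⟨p, hp, rfl⟩ := mem_image.1 hB
  rw [blowUpSet, card_insert_of_notMem (castLE_natAdd_notMem_map h _ _), card_map,
    h𝒜 (mem_product.1 hp).1]

theorem card_shadow_blowUp_le : #(∂ (blowUp h 𝒜)) ≤ #𝒜 + #(∂ 𝒜) * D := by
  have hsub : ∂ (blowUp h 𝒜) ⊆
      𝒜.map ⟨(·.map (Fin.castLEEmb (by omega))), map_injective _⟩ ∪ blowUp h (∂ 𝒜) := by
    intro t ht
    obtain ⟨_, hB, a, ha, rfl⟩ := mem_shadow_iff.1 ht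
    obtain ⟨p, hp, rfl⟩ := mem_image.1 hB
    obtain ⟨hp₁, -⟩ := mem_product.1 hp
    rcases mem_insert.1 ha with rfl | ha
    · rw [erase_blowUpSet]
      exact mem_union_left _ (mem_map_of_mem _ hp₁)
    · obtain ⟨b, hb, rfl⟩ := mem_map.1 ha
      refine mem_union_right _ (mem_image.2 ⟨(p.1.erase b, p.2), ?_, ?_⟩)
      · exact mem_product.2 ⟨erase_mem_shadow hp₁ hb, mem_univ _⟩
      · rw [blowUpSet, blowUpSet, map_erase, erase_insert_of_ne]
        rintro hb
        exact castLE_natAdd_notMem_map h p.1 p.2 (hb ▸ ha)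
  exact (card_le_card hsub).trans <| (card_union_le _ _).trans <| by rw [card_map, card_blowUp]

end BlowUp

variable {n r : ℕ} {𝒜 : Finset (Finset (Fin n))}

theorem choose_le_card_add_card_shadow_mul
    (h𝒜 : (𝒜 : Set (Finset (Fin n))).Sized r) {k D : ℕ} (hk : r + 1 ≤ k)
    (hD : k.choose (r + 1) ≤ #𝒜 * D) : k.choose r ≤ #𝒜 + #(∂ 𝒜) * D := by
  have h : n + D ≤ n + D + k := by omega
  calc k.choose r = k.choose (r + 1 - 1) := rfl
    _ ≤ #(∂ (blowUp h 𝒜)) := by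
      simpa using kruskal_katona_lovasz_form (i := 1) (by omega) hk (by omega)
        (sized_blowUp h h𝒜) (card_blowUp h ▸ hD)
    _ ≤ #𝒜 + #(∂ 𝒜) * D := card_shadow_blowUp_le h

theorem succ_mul_card_le_card_shadow (h𝒜 : (𝒜 : Set (Finset (Fin n))).Sized r) {g : ℕ}
    (hm : 2 * #𝒜 ≤ (r + g).choose g) : (r + 1) * #𝒜 ≤ 4 * (g + 1) * #(∂ 𝒜) := by
  obtain h0 | hpos := Nat.eq_zero_or_pos #𝒜
  · simp [h0]
  set m := #𝒜
  set S := #(∂ 𝒜)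
  set k := r + g + 1
  -- `D` makes `#𝒜 * D ≈ C(k, r + 1)`, so the shadow bound is about `C(k, r) / C(k, r + 1) · #𝒜`,
  -- and that ratio is `(r + 1) / (g + 1)`.
  set D := k.choose (r + 1) / m + 1
  have h_choose : 2 * m ≤ k.choose r := by
    refine hm.trans ?_
    rw [← Nat.choose_symm_add]
    exact Nat.choose_le_choose _ (by omega)
  have h_choose_succ : 2 * m ≤ k.choose (r + 1) := by
    refine hm.trans ?_
    rw [show k = (r + 1) + g by omega, Nat.choose_symm_add]
    exact Nat.choose_le_choose _ (by omega)
  have hD_lower : k.choose (r + 1) ≤ m * D := by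
    have := Nat.lt_div_mul_add (a := k.choose (r + 1)) hpos
    rw [mul_add, mul_comm]; omega
  have hD_upper : m * D ≤ 2 * k.choose (r + 1) := by
    have := Nat.div_mul_le_self (k.choose (r + 1)) m
    rw [mul_add, mul_comm]; omega
  have h_ratio : k.choose (r + 1) * (r + 1) = k.choose r * (g + 1) := by
    rw [Nat.choose_succ_right_eq, show k - r = g + 1 by omega]
  have hKK := choose_le_card_add_card_shadow_mul h𝒜 (by omega) hD_lower
  have h_choose_le : k.choose r ≤ 2 * S * D := by linarith
  refine Nat.le_of_mul_le_mul_left ?_ (show 0 < k.choose r by omega)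
  calc k.choose r * ((r + 1) * m) ≤ 2 * S * D * ((r + 1) * m) := by gcongr
    _ = 2 * S * (r + 1) * (m * D) := by ring
    _ ≤ 2 * S * (r + 1) * (2 * k.choose (r + 1)) := by gcongr
    _ = 4 * S * (k.choose (r + 1) * (r + 1)) := by ring
    _ = k.choose r * (4 * (g + 1) * S) := by rw [h_ratio]; ring

theorem sum_card_shadow_slice_le {α : Type*} [DecidableEq α] (𝒜 : Finset (Finset α))
    (I : Finset ℕ) : ∑ r ∈ I, #(∂ (𝒜 # r)) ≤ #(∂ 𝒜) := by
  rw [← card_biUnion]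
  · exact card_le_card (biUnion_subset.2 fun r _ => shadow_mono slice_subset)
  · intro r _ r' _ hrr'
    refine disjoint_left.2 fun t ht ht' => hrr' ?_
    obtain ⟨a, ha, hat⟩ := mem_shadow_iff_insert_mem.1 ht
    obtain ⟨a', ha', hat'⟩ := mem_shadow_iff_insert_mem.1 ht'
    rw [← sized_slice hat, ← sized_slice hat', card_insert_of_notMem ha,
      card_insert_of_notMem ha']

theorem mul_card_le_card_shadow {C : ℕ} (hn : 2 ^ (C + 2) * (C + 1)! ≤ n) (h𝒜 : #𝒜 ≤ n ^ C)
    (hlarge : ∀ s ∈ 𝒜, n ≤ 2 * (#s + 1)) : n * #𝒜 ≤ 8 * (C + 2) * #(∂ 𝒜) := by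
  have hslice (r : ℕ) : n * #(𝒜 # r) ≤ 8 * (C + 2) * #(∂ (𝒜 # r)) := by
    obtain h | ⟨s, hs⟩ := (𝒜 # r).eq_empty_or_nonempty
    · simp [h]
    obtain ⟨hs𝒜, rfl⟩ := mem_slice.1 hs
    have hsize : 2 * #(𝒜 # #s) ≤ (#s + (C + 1)).choose (C + 1) :=
      (Nat.mul_le_mul_left 2 ((card_le_card slice_subset).trans h𝒜)).trans
        (Nat.two_mul_pow_le_choose hn (hlarge s hs𝒜))
    calc n * #(𝒜 # #s) ≤ 2 * ((#s + 1) * #(𝒜 # #s)) := by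
          rw [← mul_assoc]; gcongr; exact hlarge s hs𝒜
      _ ≤ 2 * (4 * (C + 1 + 1) * #(∂ (𝒜 # #s))) := by
          exact Nat.mul_le_mul_left 2 (succ_mul_card_le_card_shadow sized_slice hsize)
      _ = _ := by ring
  calc n * #𝒜 = ∑ r ∈ Iic (Fintype.card (Fin n)), n * #(𝒜 # r) := by
        rw [← mul_sum, sum_card_slice]
    _ ≤ ∑ r ∈ Iic (Fintype.card (Fin n)), 8 * (C + 2) * #(∂ (𝒜 # r)) :=
        sum_le_sum fun r _ => hslice r
    _ ≤ 8 * (C + 2) * #(∂ 𝒜) := by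
        rw [← mul_sum]; gcongr; exact sum_card_shadow_slice_le _ _

theorem mul_card_le_card_shadow_union_upShadow {C : ℕ} (hn : 2 ^ (C + 2) * (C + 1)! ≤ n)
    (h𝒜 : #𝒜 ≤ n ^ C) : n * #𝒜 ≤ 16 * (C + 2) * #(∂ 𝒜 ∪ ∂⁺ 𝒜) := by
  set high := 𝒜.filter (fun s => n ≤ 2 * #s)
  set low := 𝒜.filter (fun s => ¬ n ≤ 2 * #s)
  have h_high : n * #high ≤ 8 * (C + 2) * #(∂ 𝒜 ∪ ∂⁺ 𝒜) := calc
    n * #high ≤ 8 * (C + 2) * #(∂ high) :=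
        mul_card_le_card_shadow hn ((card_le_card (filter_subset _ _)).trans h𝒜)
          fun s hs => by have := (mem_filter.1 hs).2; omega
    _ ≤ 8 * (C + 2) * #(∂ 𝒜 ∪ ∂⁺ 𝒜) := by
        gcongr; exact (shadow_mono (filter_subset _ _)).trans subset_union_left
  have h_low : n * #low ≤ 8 * (C + 2) * #(∂ 𝒜 ∪ ∂⁺ 𝒜) := calc
    n * #low = n * #lowᶜˢ := by rw [card_compls]
    _ ≤ 8 * (C + 2) * #(∂ lowᶜˢ) := by
        refine mul_card_le_card_shadow hn ?_ fun s hs => ?_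
        · rw [card_compls]; exact (card_le_card (filter_subset _ _)).trans h𝒜
        · have := (mem_filter.1 (mem_compls.1 hs)).2
          rw [card_compl, Fintype.card_fin] at this
          have := s.card_le_univ.trans_eq (Fintype.card_fin n)
          omega
    _ = 8 * (C + 2) * #(∂⁺ low) := by rw [shadow_compls, card_compls]
    _ ≤ 8 * (C + 2) * #(∂ 𝒜 ∪ ∂⁺ 𝒜) := by
        gcongr; exact (upShadow_monotone (filter_subset _ _)).trans subset_union_right
  calc n * #𝒜 = n * #high + n * #low := by rw [← mul_add, card_filter_add_card_filter_not]
    _ ≤ 8 * (C + 2) * #(∂ 𝒜 ∪ ∂⁺ 𝒜) + 8 * (C + 2) * #(∂ 𝒜 ∪ ∂⁺ 𝒜) := add_le_add h_high h_low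
    _ = 16 * (C + 2) * #(∂ 𝒜 ∪ ∂⁺ 𝒜) := by ring

end Finset

def cubeEquiv (d : ℕ) : Finset (Fin d) ≃ (Fin d → ZMod 2) where
  toFun s i := if i ∈ s then 1 else 0
  invFun v := {i | v i ≠ 0}
  left_inv s := by ext i; by_cases h : i ∈ s <;> simp [h]
  right_inv v := by
    funext i
    have : v i = 0 ∨ v i = 1 := by generalize v i = a; revert a; decide
    rcases this with h | h <;> simp [h]

theorem hammingDist_cubeEquiv {d : ℕ} (s t : Finset (Fin d)) :
    hammingDist (cubeEquiv d s) (cubeEquiv d t) = #(symmDiff s t) := by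
  unfold hammingDist
  congr 1
  ext i
  by_cases hs : i ∈ s <;> by_cases ht : i ∈ t <;> simp [cubeEquiv, hs, ht, mem_symmDiff]

theorem cubeEquiv_mem_nbhd_of_mem_shadow_union_upShadow {d : ℕ} {A : Set (Fin d → ZMod 2)}
    {𝒜 : Finset (Finset (Fin d))} (h𝒜 : ∀ s ∈ 𝒜, cubeEquiv d s ∈ A) {t : Finset (Fin d)}
    (ht : t ∈ ∂ 𝒜 ∪ ∂⁺ 𝒜) : cubeEquiv d t ∈ nbhd (cubeGraph d) A := by
  rcases mem_union.1 ht with ht | ht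
  · obtain ⟨s, hs, hts, hcard⟩ := mem_shadow_iff_exists_sdiff.1 ht
    refine ⟨_, h𝒜 s hs, ?_⟩
    show hammingDist _ _ = 1
    rwa [hammingDist_cubeEquiv, symmDiff_of_ge hts]
  · obtain ⟨s, hs, hst, hcard⟩ := mem_upShadow_iff_exists_sdiff.1 ht
    refine ⟨_, h𝒜 s hs, ?_⟩
    show hammingDist _ _ = 1
    rwa [hammingDist_cubeEquiv, symmDiff_of_le hst]

/-- for every fixed constant `C` there is a constant `c` such that, for all
large `d`, every `A ⊆ E` with `|A| ≤ d^C` satisfies `|A| ≤ c·|N(A)|/d`. -/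
theorem small_sets_expand (C : ℕ) :
    ∃ c : ℝ, 0 < c ∧ ∃ d₀ : ℕ, ∀ d ≥ d₀, ∀ A : Set (Fin d → ZMod 2),
      A ⊆ evenSide d → A.ncard ≤ d ^ C →
      (A.ncard : ℝ) ≤ c * (nbhd (cubeGraph d) A).ncard / d := by
  refine ⟨16 * (C + 2), by positivity, 2 ^ (C + 2) * (C + 1)!, fun d hd A _ hA => ?_⟩
  classical
  let e := cubeEquiv d
  let 𝒜 := (e ⁻¹' A).toFinset
  have h𝒜 : #𝒜 = A.ncard := by
    rw [← Set.ncard_eq_toFinset_card', Set.ncard_preimage_of_injective_subset_range e.injective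
      (by simp)]
  have hN : #(∂ 𝒜 ∪ ∂⁺ 𝒜) ≤ (nbhd (cubeGraph d) A).ncard := by
    rw [← card_map e.toEmbedding, ← Set.ncard_coe_finset]
    refine Set.ncard_le_ncard ?_ (Set.toFinite _)
    intro v hv
    obtain ⟨t, ht, rfl⟩ := mem_map.1 hv
    exact cubeEquiv_mem_nbhd_of_mem_shadow_union_upShadow (by simp [𝒜, e]) ht
  have hexp : d * A.ncard ≤ 16 * (C + 2) * (nbhd (cubeGraph d) A).ncard :=
    h𝒜 ▸ (mul_card_le_card_shadow_union_upShadow hd (h𝒜 ▸ hA)).trans (Nat.mul_le_mul_left _ hN)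
  have hd₀ : (0 : ℝ) < d :=
    Nat.cast_pos.2 ((by positivity : 0 < 2 ^ (C + 2) * (C + 1)!).trans_le hd)
  rw [le_div_iff₀ hd₀, mul_comm]
  exact_mod_cast hexp
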